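/- arXiv:1007.3572 — 2 statements merged into one kernel-verified Lean document; each statement's English description precedes it below -/
import Mathlib

section
/- Let F be a finite field with q elements and let 1 ≤ k ≤ q − 1. Consider the Reed–Solomon code of length q − 1 and dimension k over F, i.e. the set of words (p(α))_{α ∈ F \ {0}} ∈ F^{q−1} as p ranges over polynomials over F of degree less than k. Then the minimum Hamming distance of this code equals q − k: any two distinct codewords differ in at least q − k coordinates, and there exist two distinct codewords differing in exactly q − k coordinates. -/
/-!
A nonzero polynomial of degree `< k` has at most `k - 1` roots, so two distinct codewords agree in
at most `k - 1` of the `q - 1` coordinates. The bound is attained by the codeword of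
`∏ (X - a)` over any `k - 1` nonzero points `a`, which differs from the zero codeword exactly off
those points.
-/

open Finset Polynomial

/-- The Reed–Solomon code of dimension `k` over `F`: evaluations of
polynomials of degree `< k` at all nonzero elements of `F`. -/
def ReedSolomonCode (F : Type*) [Field F] (k : ℕ) :
    Set ({x : F // x ≠ 0} → F) :=
  {c | ∃ p : Polynomial F, p ∈ Polynomial.degreeLT F k ∧
        ∀ α : {x : F // x ≠ 0}, c α = Polynomial.eval (α : F) p}

theorem prod_X_sub_C_mem_degreeLT {ι R : Type*} [CommRing R] [Nontrivial R] (f : ι → R)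
    (T : Finset ι) {k : ℕ} (hT : #T < k) : ∏ j ∈ T, (X - C (f j)) ∈ degreeLT R k :=
  mem_degreeLT.mpr <| degree_le_natDegree.trans_lt <| by
    rw [natDegree_finsetProd_X_sub_C_eq_card]
    exact_mod_cast hT

section EvaluationCode

variable {ι R : Type*} [Fintype ι] [CommRing R] [IsDomain R] [DecidableEq R]
  {f : ι → R}

theorem card_sub_natDegree_le_hammingNorm_eval (hf : Function.Injective f) {p : R[X]}
    (hp : p ≠ 0) : Fintype.card ι - p.natDegree ≤ hammingNorm fun i => p.eval (f i) := by
  have hzeros : #{i | p.eval (f i) = 0} ≤ p.natDegree := by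
    rw [← card_image_of_injective _ hf]
    refine card_le_degree_of_subset_roots fun a ha => ?_
    obtain ⟨i, hi, rfl⟩ := mem_image.mp ha
    exact (mem_roots hp).mpr (mem_filter.mp hi).2
  have hsplit := card_filter_add_card_filter_not (s := univ) fun i => p.eval (f i) = 0
  rw [card_univ] at hsplit
  simp only [hammingNorm, ne_eq]
  omega

theorem card_add_one_sub_le_hammingDist_eval (hf : Function.Injective f) {k : ℕ}
    {p r : R[X]} (hp : p ∈ degreeLT R k) (hr : r ∈ degreeLT R k) (hpr : p ≠ r) :
    Fintype.card ι + 1 - k ≤ hammingDist (fun i => p.eval (f i)) (fun i => r.eval (f i)) := by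
  have hsub : p - r ≠ 0 := sub_ne_zero.mpr hpr
  have hdeg : (p - r).natDegree < k :=
    (natDegree_lt_iff_degree_lt hsub).mpr (mem_degreeLT.mp (Submodule.sub_mem _ hp hr))
  have hdist : hammingDist (fun i => p.eval (f i)) (fun i => r.eval (f i)) =
      hammingNorm fun i => (p - r).eval (f i) := by
    simp only [hammingDist, hammingNorm, eval_sub, sub_ne_zero]
  have := card_sub_natDegree_le_hammingNorm_eval hf hsub
  omega

theorem hammingNorm_eval_prod_X_sub_C (hf : Function.Injective f) (T : Finset ι) :
    (hammingNorm fun i => (∏ j ∈ T, (X - C (f j))).eval (f i)) = Fintype.card ι - #T := by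
  classical
  have hnonzero : ({i | (∏ j ∈ T, (X - C (f j))).eval (f i) ≠ 0} : Finset ι) = Tᶜ := by
    ext i
    simp [eval_prod, prod_eq_zero_iff, sub_eq_zero, hf.eq_iff]
  rw [hammingNorm, hnonzero, card_compl]

end EvaluationCode

/-- for a finite field `F` with `q` elements and `1 ≤ k ≤ q - 1`,
the Reed–Solomon code of length `q - 1` and dimension `k` has minimum Hamming
distance exactly `q - k`. -/
theorem reedSolomon_min_hammingDist {F : Type*} [Field F] [Fintype F]
    [DecidableEq F] (q k : ℕ) (hq : Fintype.card F = q)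
    (hk1 : 1 ≤ k) (hk2 : k ≤ q - 1) :
    (∀ c₁ ∈ ReedSolomonCode F k, ∀ c₂ ∈ ReedSolomonCode F k,
        c₁ ≠ c₂ → q - k ≤ hammingDist c₁ c₂) ∧
      (∃ c₁ ∈ ReedSolomonCode F k, ∃ c₂ ∈ ReedSolomonCode F k,
        c₁ ≠ c₂ ∧ hammingDist c₁ c₂ = q - k) := by
  have hlen : Fintype.card {x : F // x ≠ 0} = q - 1 := by
    simp [Fintype.card_subtype_compl, hq]
  refine ⟨?_, ?_⟩
  · rintro c₁ ⟨p₁, hp₁, he₁⟩ c₂ ⟨p₂, hp₂, he₂⟩ hne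
    obtain rfl : c₁ = _ := funext he₁
    obtain rfl : c₂ = _ := funext he₂
    have hp : p₁ ≠ p₂ := by rintro rfl; exact hne rfl
    have := card_add_one_sub_le_hammingDist_eval
      (Subtype.val_injective (p := (· ≠ (0 : F)))) hp₁ hp₂ hp
    omega
  · obtain ⟨T, -, hT⟩ := exists_subset_card_eq (s := (univ : Finset {x : F // x ≠ 0}))
      (n := k - 1) (by rw [card_univ, hlen]; omega)
    set p := ∏ α ∈ T, (X - C (α : F))
    have hdist : hammingDist (fun α : {x : F // x ≠ 0} => p.eval (α : F)) 0 = q - k := by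
      rw [hammingDist_zero_right, hammingNorm_eval_prod_X_sub_C Subtype.val_injective, hlen, hT]
      omega
    refine ⟨_, ⟨p, prod_X_sub_C_mem_degreeLT _ T (by omega), fun _ => rfl⟩,
      0, ⟨0, zero_mem _, fun _ => by simp⟩, fun h => ?_, hdist⟩
    rw [h, hammingDist_self] at hdist
    omega
end

section
/- The number of quasigroup operations on a set of n elements (equivalently, the number of Latin squares of order n) is at least n!·(n−1)!·…·2!·1! = ∏_{k=1}^{n} k!. -/
/-!
Build a Latin square one row at a time. In a `k × n` Latin rectangle every column misses exactly
`n - k` symbols and every symbol is missing from exactly `n - k` columns, so by double counting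
the family of sets of missing symbols satisfies Hall's condition, and the rows that can be
appended are exactly its systems of distinct representatives. By Marshall Hall's theorem a
family satisfying Hall's condition whose sets all have at least `m` elements has at least `m!`
systems of distinct representatives, so every `k`-row rectangle extends in at least `(n - k)!`
ways, and multiplying over `k = 0, …, n - 1` gives `∏ k!`.

Marshall Hall's theorem is proved by induction on the number of sets. If some nonempty proper
subfamily is critical (its union is no larger than itself), representatives are chosen
independently on it and on the rest of the family with its union removed, which still satisfies
Hall's condition. Otherwise every nonempty proper subfamily has surplus, so after fixing the
representative of one set to any of its at least `m` elements, the remaining sets with that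
element removed still satisfy Hall's condition and have at least `m - 1` elements each.
-/

open Finset Function
open scoped Nat

theorem card_le_card_biUnion_of_regular {ι β : Type*} [Fintype ι] [DecidableEq β]
    {A : ι → Finset β} {d : ℕ} (hd : 0 < d) (hA : ∀ i, d ≤ #(A i))
    (hB : ∀ b, #{i | b ∈ A i} ≤ d) (S : Finset ι) : #S ≤ #(S.biUnion A) := by
  refine Nat.le_of_mul_le_mul_right (card_mul_le_card_mul (fun i b => b ∈ A i) ?_ ?_) hd
  · intro i hi
    rw [bipartiteAbove, filter_mem_eq_inter, inter_eq_right.2 (subset_biUnion_of_mem A hi)]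
    exact hA i
  · intro b _
    exact (card_le_card (filter_subset_filter _ (subset_univ S))).trans (hB b)

section HallCondition

variable {ι β : Type*} [DecidableEq ι] [DecidableEq β] {I J : Finset ι} {A : ι → Finset β}

theorem hall_sdiff_biUnion (hall : ∀ S ⊆ I, #S ≤ #(S.biUnion A)) (hJI : J ⊆ I)
    (hJ : #(J.biUnion A) ≤ #J) (S : Finset ι) (hS : S ⊆ I \ J) :
    #S ≤ #(S.biUnion fun i => A i \ J.biUnion A) := by
  have hdisj : Disjoint S J := disjoint_of_subset_left hS sdiff_disjoint
  have hcover : (S ∪ J).biUnion A ⊆ (S.biUnion fun i => A i \ J.biUnion A) ∪ J.biUnion A := by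
    intro y hy
    obtain ⟨i, hi, hyA⟩ := mem_biUnion.1 hy
    by_cases hyJ : y ∈ J.biUnion A
    · exact mem_union_right _ hyJ
    · have hiS : i ∈ S :=
        (mem_union.1 hi).resolve_right fun hiJ => hyJ (mem_biUnion.2 ⟨i, hiJ, hyA⟩)
      exact mem_union_left _ (mem_biUnion.2 ⟨i, hiS, mem_sdiff.2 ⟨hyA, hyJ⟩⟩)
  have := card_union_of_disjoint hdisj
  have := hall _ (union_subset (hS.trans sdiff_subset) hJI)
  have := (card_le_card hcover).trans (card_union_le _ _)
  omega

theorem hall_erase_of_lt (hlt : ∀ S ⊆ I, S.Nonempty → S ≠ I → #S < #(S.biUnion A))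
    {i : ι} (hi : i ∈ I) (x : β) (S : Finset ι) (hS : S ⊆ I.erase i) :
    #S ≤ #(S.biUnion fun j => (A j).erase x) := by
  rcases S.eq_empty_or_nonempty with rfl | hS_ne
  · simp
  have hSI : S ≠ I := fun h => notMem_erase i I (hS (h ▸ hi))
  have := hlt S (hS.trans (erase_subset i I)) hS_ne hSI
  have := pred_card_le_card_erase (s := S.biUnion A) (a := x)
  rw [erase_biUnion] at this
  omega

end HallCondition

section Transversals

variable {ι β : Type*} [Fintype ι] [DecidableEq ι] [Fintype β] [DecidableEq β] [Inhabited β]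

open scoped Classical in
/-- Systems of distinct representatives of `A` over `I`, normalised to `default` off `I` so that
each one is counted once. -/
noncomputable def transversals (I : Finset ι) (A : ι → Finset β) : Finset (ι → β) :=
  {f | Set.InjOn f I ∧ (∀ i ∈ I, f i ∈ A i) ∧ ∀ i ∉ I, f i = default}

variable {I J : Finset ι} {A : ι → Finset β}

theorem mem_transversals {f : ι → β} :
    f ∈ transversals I A ↔
      Set.InjOn f I ∧ (∀ i ∈ I, f i ∈ A i) ∧ ∀ i ∉ I, f i = default := by
  simp [transversals]

theorem transversals_nonempty (hall : ∀ S ⊆ I, #S ≤ #(S.biUnion A)) :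
    (transversals I A).Nonempty := by
  have hall' (S : Finset I) : #S ≤ #(S.biUnion fun i => A i) := by
    simpa [map_eq_image, image_biUnion, card_image_of_injective _ Subtype.val_injective] using
      hall (S.map (Embedding.subtype _)) (by intro i; simp +contextual)
  obtain ⟨f, hf_inj, hf_mem⟩ := (all_card_le_biUnion_card_iff_exists_injective _).mp hall'
  refine ⟨fun i => if hi : i ∈ I then f ⟨i, hi⟩ else default,
    mem_transversals.2 ⟨?_, ?_, ?_⟩⟩
  · intro i hi j hj hij
    simp only [mem_coe] at hi hj
    exact congrArg Subtype.val (hf_inj (by simpa [dif_pos hi, dif_pos hj] using hij))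
  · intro i hi
    simpa [dif_pos hi] using hf_mem ⟨i, hi⟩
  · intro i hi
    simp [dif_neg hi]

theorem piecewise_mem_transversals (hJI : J ⊆ I) {g h : ι → β} (hg : g ∈ transversals J A)
    (hh : h ∈ transversals (I \ J) fun i => A i \ J.biUnion A) :
    J.piecewise g h ∈ transversals I A := by
  obtain ⟨hg_inj, hg_mem, -⟩ := mem_transversals.1 hg
  obtain ⟨hh_inj, hh_mem, hh_out⟩ := mem_transversals.1 hh
  have hg_U : ∀ i ∈ J, g i ∈ J.biUnion A := fun i hi => mem_biUnion.2 ⟨i, hi, hg_mem i hi⟩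
  have hh_U : ∀ i ∈ I, i ∉ J → h i ∉ J.biUnion A := fun i hi hiJ =>
    (mem_sdiff.1 (hh_mem i (mem_sdiff.2 ⟨hi, hiJ⟩))).2
  refine mem_transversals.2 ⟨?_, fun i hi => ?_, fun i hi => ?_⟩
  · intro i hi j hj hij
    simp only [mem_coe] at hi hj
    by_cases hiJ : i ∈ J <;> by_cases hjJ : j ∈ J <;>
      simp only [piecewise, hiJ, hjJ, if_true, if_false] at hij
    · exact hg_inj hiJ hjJ hij
    · exact absurd (hij ▸ hg_U i hiJ) (hh_U j hj hjJ)
    · exact absurd (hij ▸ hg_U j hjJ) (hh_U i hi hiJ)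
    · exact hh_inj (by simp [hi, hiJ]) (by simp [hj, hjJ]) hij
  · by_cases hiJ : i ∈ J
    · simpa [hiJ] using hg_mem i hiJ
    · simpa [hiJ] using (mem_sdiff.1 (hh_mem i (mem_sdiff.2 ⟨hi, hiJ⟩))).1
  · have hiJ : i ∉ J := fun h => hi (hJI h)
    simpa [hiJ] using hh_out i (by simp [hi])

theorem card_transversals_mul_card_transversals_sdiff_le (hJI : J ⊆ I) :
    #(transversals J A) * #(transversals (I \ J) fun i => A i \ J.biUnion A) ≤
      #(transversals I A) := by
  rw [← card_product]
  refine card_le_card_of_injOn (fun p => J.piecewise p.1 p.2)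
    (fun p hp => piecewise_mem_transversals hJI (mem_product.1 hp).1 (mem_product.1 hp).2) ?_
  rintro ⟨g, h⟩ hp ⟨g', h'⟩ hp' hgh
  simp only [coe_product, Set.mem_prod, mem_coe, mem_transversals] at hp hp'
  have hJ : ∀ i ∈ J, i ∉ I \ J := fun i hi => by simp [hi]
  refine Prod.ext (funext fun i => ?_) (funext fun i => ?_) <;> dsimp only <;>
    by_cases hiJ : i ∈ J
  · simpa [hiJ] using congrFun hgh i
  · rw [hp.1.2.2 i hiJ, hp'.1.2.2 i hiJ]
  · rw [hp.2.2.2 i (hJ i hiJ), hp'.2.2.2 i (hJ i hiJ)]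
  · simpa [hiJ] using congrFun hgh i

theorem update_mem_transversals {i : ι} (hi : i ∈ I) {x : β} (hx : x ∈ A i) {g : ι → β}
    (hg : g ∈ transversals (I.erase i) fun j => (A j).erase x) :
    update g i x ∈ transversals I A := by
  obtain ⟨hg_inj, hg_mem, hg_out⟩ := mem_transversals.1 hg
  have hg_ne : ∀ j ∈ I, j ≠ i → g j ≠ x := fun j hj hji =>
    (mem_erase.1 (hg_mem j (mem_erase.2 ⟨hji, hj⟩))).1
  refine mem_transversals.2 ⟨?_, fun j hj => ?_, fun j hj => ?_⟩
  · intro j hj k hk hjk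
    simp only [mem_coe] at hj hk
    by_cases hji : j = i <;> by_cases hki : k = i
    · rw [hji, hki]
    · subst hji
      simp only [update_self, update_of_ne hki] at hjk
      exact absurd hjk.symm (hg_ne k hk hki)
    · subst hki
      simp only [update_self, update_of_ne hji] at hjk
      exact absurd hjk (hg_ne j hj hji)
    · simp only [update_of_ne hji, update_of_ne hki] at hjk
      exact hg_inj (mem_erase.2 ⟨hji, hj⟩) (mem_erase.2 ⟨hki, hk⟩) hjk
  · by_cases hji : j = i
    · subst hji; simpa using hx
    · simpa [update_of_ne hji] using mem_of_mem_erase (hg_mem j (mem_erase.2 ⟨hji, hj⟩))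
  · have hji : j ≠ i := fun h => hj (h ▸ hi)
    simpa [update_of_ne hji] using hg_out j fun h => hj (mem_of_mem_erase h)

theorem sum_card_transversals_erase_le {i : ι} (hi : i ∈ I) :
    ∑ x ∈ A i, #(transversals (I.erase i) fun j => (A j).erase x) ≤ #(transversals I A) := by
  rw [← card_sigma]
  refine card_le_card_of_injOn (fun p => update p.2 i p.1)
    (fun p hp => update_mem_transversals hi (mem_sigma.1 hp).1 (mem_sigma.1 hp).2) ?_
  rintro ⟨x, g⟩ hp ⟨x', g'⟩ hp' hgg
  simp only [coe_sigma, Set.mem_sigma_iff, mem_coe, mem_transversals] at hp hp' hgg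
  obtain rfl : x = x' := by simpa using congrFun hgg i
  congr 1
  funext j
  by_cases hji : j = i
  · rw [hji, hp.2.2.2 i (notMem_erase i I), hp'.2.2.2 i (notMem_erase i I)]
  · simpa [update_of_ne hji] using congrFun hgg j

theorem factorial_le_card_transversals {m : ℕ} (hall : ∀ S ⊆ I, #S ≤ #(S.biUnion A))
    (hm : m ≤ #I) (hA : ∀ i ∈ I, m ≤ #(A i)) : m ! ≤ #(transversals I A) := by
  induction hI : #I using Nat.strong_induction_on generalizing I A m with
  | _ N ih =>
  cases m with
  | zero => exact (transversals_nonempty hall).card_pos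
  | succ m =>
  by_cases hcrit : ∃ J ⊆ I, J.Nonempty ∧ J ≠ I ∧ #(J.biUnion A) ≤ #J
  · obtain ⟨J, hJI, ⟨j, hj⟩, hJ_ne, hJ⟩ := hcrit
    have hmJ : m + 1 ≤ #J :=
      (hA j (hJI hj)).trans ((card_le_card (subset_biUnion_of_mem A hj)).trans hJ)
    have hJ_lt : #J < N := hI ▸ card_lt_card (hJI.ssubset_of_ne hJ_ne)
    calc (m + 1)! ≤ #(transversals J A) * 1 := by
          rw [mul_one]
          exact ih _ hJ_lt (fun S hS => hall S (hS.trans hJI)) hmJ (fun i hi => hA i (hJI hi)) rfl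
      _ ≤ #(transversals J A) * #(transversals (I \ J) fun i => A i \ J.biUnion A) :=
          Nat.mul_le_mul_left _ (transversals_nonempty (hall_sdiff_biUnion hall hJI hJ)).card_pos
      _ ≤ #(transversals I A) := card_transversals_mul_card_transversals_sdiff_le hJI
  · push Not at hcrit
    obtain ⟨i, hi⟩ : I.Nonempty := card_pos.1 (by omega)
    have hcard_erase : #(I.erase i) = N - 1 := by rw [card_erase_of_mem hi, hI]
    calc (m + 1)! = (m + 1) * m ! := Nat.factorial_succ m
      _ ≤ #(A i) * m ! := Nat.mul_le_mul_right _ (hA i hi)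
      _ = ∑ x ∈ A i, m ! := by rw [sum_const, smul_eq_mul]
      _ ≤ ∑ x ∈ A i, #(transversals (I.erase i) fun j => (A j).erase x) := by
          refine sum_le_sum fun x _ => ih _ (by omega) (hall_erase_of_lt hcrit hi x) (by omega)
            (fun j hj => ?_) rfl
          have := hA j (mem_of_mem_erase hj)
          have := pred_card_le_card_erase (s := A j) (a := x)
          omega
      _ ≤ #(transversals I A) := sum_card_transversals_erase_le hi

end Transversals

section LatinRectangles

def latinRectangles (n k : ℕ) : Finset (Fin k → Fin n → Fin n) :=
  {g | (∀ r, Bijective (g r)) ∧ ∀ x, Injective fun r => g r x}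

def absentSymbols {n k : ℕ} (g : Fin k → Fin n → Fin n) (x : Fin n) : Finset (Fin n) :=
  {y | ∀ r, g r x ≠ y}

variable {n k : ℕ} {g : Fin k → Fin n → Fin n}

theorem mem_latinRectangles :
    g ∈ latinRectangles n k ↔ (∀ r, Bijective (g r)) ∧ ∀ x, Injective fun r => g r x := by
  simp [latinRectangles]

theorem card_absentSymbols (hg : g ∈ latinRectangles n k) (x : Fin n) :
    #(absentSymbols g x) = n - k := by
  have : absentSymbols g x = (univ.image fun r => g r x)ᶜ := by ext y; simp [absentSymbols]
  rw [this, card_compl, card_image_of_injective _ ((mem_latinRectangles.1 hg).2 x), card_univ,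
    Fintype.card_fin, Fintype.card_fin]

theorem card_filter_mem_absentSymbols (hg : g ∈ latinRectangles n k) (y : Fin n) :
    #{x | y ∈ absentSymbols g x} = n - k := by
  obtain ⟨hrow, hcol⟩ := mem_latinRectangles.1 hg
  -- `c r` is the column in which row `r` carries the symbol `y`
  let c : Fin k → Fin n := fun r => (Equiv.ofBijective _ (hrow r)).symm y
  have hc (r : Fin k) (x : Fin n) : g r x = y ↔ x = c r :=
    (Equiv.ofBijective _ (hrow r)).eq_symm_apply.symm
  have hc_inj : Injective c := fun r r' h => hcol (c r) <| by
    change g r (c r) = g r' (c r)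
    rw [(hc r _).2 rfl, h, (hc r' _).2 rfl]
  have : ({x | y ∈ absentSymbols g x} : Finset (Fin n)) = (univ.image c)ᶜ := by
    ext x
    simp only [absentSymbols, mem_filter, mem_univ, true_and, mem_compl, mem_image, not_exists]
    exact forall_congr' fun r => by rw [ne_eq, hc, eq_comm]
  rw [this, card_compl, card_image_of_injective _ hc_inj, card_univ,
    Fintype.card_fin, Fintype.card_fin]

theorem snoc_mem_latinRectangles (hg : g ∈ latinRectangles n k) {f : Fin n → Fin n}
    (hf : Bijective f) (hf_absent : ∀ x, f x ∈ absentSymbols g x) :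
    Fin.snoc (α := fun _ => Fin n → Fin n) g f ∈ latinRectangles n (k + 1) := by
  obtain ⟨hrow, hcol⟩ := mem_latinRectangles.1 hg
  refine mem_latinRectangles.2
    ⟨Fin.lastCases (by simpa using hf) (by simpa using hrow), fun x => ?_⟩
  have hcolumn : (fun r => Fin.snoc (α := fun _ => Fin n → Fin n) g f r x) =
      Fin.snoc (fun r => g r x) (f x) := by
    funext r
    induction r using Fin.lastCases <;> simp
  rw [hcolumn, Fin.snoc_injective_iff]
  refine ⟨hcol x, ?_⟩
  rintro ⟨r, hr⟩
  exact (mem_filter.1 (hf_absent x)).2 r hr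

theorem card_latinRectangles_mul_factorial_le (hk : k < n) :
    #(latinRectangles n k) * (n - k)! ≤ #(latinRectangles n (k + 1)) := by
  have : Inhabited (Fin n) := ⟨⟨0, by omega⟩⟩
  have hext (g) (hg : g ∈ latinRectangles n k) :
      (n - k)! ≤ #(transversals univ (absentSymbols g)) :=
    factorial_le_card_transversals
      (fun S _ => card_le_card_biUnion_of_regular (by omega)
        (fun x => (card_absentSymbols hg x).ge)
        (fun y => (card_filter_mem_absentSymbols hg y).le) S)
      (by simp) (fun x _ => (card_absentSymbols hg x).ge)
  calc #(latinRectangles n k) * (n - k)! = ∑ g ∈ latinRectangles n k, (n - k)! := by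
        rw [sum_const, smul_eq_mul]
    _ ≤ ∑ g ∈ latinRectangles n k, #(transversals univ (absentSymbols g)) := sum_le_sum hext
    _ = #((latinRectangles n k).sigma fun g => transversals univ (absentSymbols g)) :=
        (card_sigma _ _).symm
    _ ≤ #(latinRectangles n (k + 1)) := by
        refine card_le_card_of_injOn (fun p => Fin.snoc (α := fun _ => Fin n → Fin n) p.1 p.2)
          (fun p hp => ?_) (fun p _ q _ hpq => ?_)
        · obtain ⟨hg, hf⟩ := mem_sigma.1 hp
          obtain ⟨hf_inj, hf_absent, -⟩ := mem_transversals.1 hf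
          rw [coe_univ, Set.injOn_univ, Finite.injective_iff_bijective] at hf_inj
          exact snoc_mem_latinRectangles hg hf_inj fun x => hf_absent x (mem_univ x)
        · obtain ⟨h1, h2⟩ := Fin.snoc_injective2 hpq
          exact Sigma.ext h1 (heq_of_eq h2)

theorem prod_factorial_le_card_latinRectangles (hk : k ≤ n) :
    ∏ j ∈ Ioc (n - k) n, j ! ≤ #(latinRectangles n k) := by
  induction k with
  | zero =>
    rw [Nat.sub_zero, Ioc_self, prod_empty]
    exact card_pos.2
      ⟨fun r => r.elim0, mem_latinRectangles.2 ⟨fun r => r.elim0, fun _ r => r.elim0⟩⟩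
  | succ k ih =>
    rw [← Icc_add_one_left_eq_Ioc, show n - (k + 1) + 1 = n - k by omega,
      ← Ioc_insert_left (Nat.sub_le n k), prod_insert left_notMem_Ioc, mul_comm]
    exact (Nat.mul_le_mul_right _ (ih (by omega))).trans (card_latinRectangles_mul_factorial_le hk)

end LatinRectangles

/-- the number of quasigroup operations on an `n`-element set
(equivalently, the number of Latin squares of order `n`) is at least
`n!·(n−1)!·…·2!·1! = ∏_{k=1}^{n} k!`. -/
theorem card_quasigroup_ops_ge_prod_factorials (n : ℕ) :
    ∏ k ∈ Finset.Icc 1 n, Nat.factorial k ≤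
      Nat.card {f : Fin n → Fin n → Fin n //
        (∀ a, Function.Bijective (f a)) ∧
        (∀ a, Function.Bijective fun x => f x a)} := by
  have hsquares : latinRectangles n n =
      ({f | (∀ a, Bijective (f a)) ∧ ∀ a, Bijective fun x => f x a} : Finset _) := by
    ext f
    simp [latinRectangles, Finite.injective_iff_bijective]
  have hbound := prod_factorial_le_card_latinRectangles (le_refl n)
  rw [Nat.sub_self, ← Icc_add_one_left_eq_Ioc, zero_add] at hbound
  rwa [Nat.card_eq_fintype_card, Fintype.card_subtype, ← hsquares]
end
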